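/- arXiv:0801.2441 — 2 statements merged into one kernel-verified Lean document; each statement's English description precedes it below -/
import Mathlib

section
/- For all real numbers s and t, (e^s + e^t)/2 ≥ e^{(s+t)/2} + (1/8)(s − t)² e^{(s+t)/2}. -/
open Real

lemma cosh_aux {x : ℝ} (hx : 0 ≤ x) : 2 + x ^ 2 ≤ Real.exp x + Real.exp (-x) := by
  have h1 : 1 + x + x ^ 2 / 2 + x ^ 3 / 6 ≤ Real.exp x := by
    have := Real.sum_le_exp_of_nonneg hx 4
    simp [Finset.sum_range_succ, Nat.factorial] at this
    nlinarith [this]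
  have h2 : Real.exp x * Real.exp (-x) = 1 := by
    rw [← Real.exp_add]; simp
  have h3 : 0 < Real.exp (-x) := Real.exp_pos _
  set a := Real.exp x with ha
  have hap : 0 < a := Real.exp_pos x
  have hcp : (1:ℝ) ≤ 1 + x + x ^ 2 / 2 + x ^ 3 / 6 := by nlinarith
  have hgoal : (2 + x ^ 2) * (1 + x + x ^ 2 / 2 + x ^ 3 / 6) ≤
      (1 + x + x ^ 2 / 2 + x ^ 3 / 6) ^ 2 + 1 := by
    nlinarith [pow_nonneg hx 4, pow_nonneg hx 6]
  have h5 : 0 ≤ (a - (1 + x + x ^ 2 / 2 + x ^ 3 / 6)) *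
      (a * (1 + x + x ^ 2 / 2 + x ^ 3 / 6) - 1) :=
    mul_nonneg (by linarith) (by nlinarith)
  have hcpos : (0:ℝ) < 1 + x + x ^ 2 / 2 + x ^ 3 / 6 := by linarith
  have h6 : Real.exp (-x) * (a * (1 + x + x ^ 2 / 2 + x ^ 3 / 6)) =
      1 + x + x ^ 2 / 2 + x ^ 3 / 6 := by
    rw [show Real.exp (-x) * (a * (1 + x + x ^ 2 / 2 + x ^ 3 / 6)) =
      (a * Real.exp (-x)) * (1 + x + x ^ 2 / 2 + x ^ 3 / 6) by ring, h2, one_mul]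
  nlinarith [mul_pos hap hcpos, h6, h5, mul_le_mul_of_nonneg_left hgoal hap.le]

lemma key (u : ℝ) : 2 + u ^ 2 ≤ Real.exp u + Real.exp (-u) := by
  rcases le_total 0 u with h | h
  · exact cosh_aux h
  · have := cosh_aux (neg_nonneg.mpr h)
    simpa [neg_neg, add_comm] using this

/-- Convexity inequality for the exponential:
`(e^s + e^t)/2 ≥ e^((s+t)/2) + (1/8)(s-t)² e^((s+t)/2)`. -/
theorem stmt_9 (s t : ℝ) :
    Real.exp ((s + t) / 2) + (1 / 8) * (s - t) ^ 2 * Real.exp ((s + t) / 2) ≤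
      (Real.exp s + Real.exp t) / 2 := by
  have hm : 0 < Real.exp ((s + t) / 2) := Real.exp_pos _
  have h1 : Real.exp s = Real.exp ((s + t) / 2) * Real.exp ((s - t) / 2) := by
    rw [← Real.exp_add]; ring_nf
  have h2 : Real.exp t = Real.exp ((s + t) / 2) * Real.exp (-((s - t) / 2)) := by
    rw [← Real.exp_add]; ring_nf
  have hk := key ((s - t) / 2)
  rw [h1, h2]
  nlinarith [mul_le_mul_of_nonneg_left hk hm.le]
end

section
/- Let N ≥ 13 be an integer and consider the real quartic polynomial P(α) = α⁴ − 2(N−4)α³ + (N²−10N+20)α² + 2(N−2)(N−4)α − 8(N−2)(N−4), which can be written as P(α) = α(α+2)(N−4−α)(N−2−α) − 8(N−2)(N−4). Then P has four distinct real roots; moreover, exactly one root lies in the open interval (0, (N−4)/2), exactly one root is negative, and exactly two roots are greater than (N−4)/2. -/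
/-!
Write `n = N` and `m = (n - 4)/2`. The quartic is `α(α+2)(n-4-α)(n-2-α) - 8(n-2)(n-4)`,
which is invariant under the reflection `α ↦ n - 4 - α` about `m`. It is negative at `0` and
`-2` and positive at `m` and `-n`, so the intermediate value theorem gives roots in `(-n, -2)`
and `(0, m)`; their reflections lie in `(n - 2, 2n - 4)` and `(m, n - 4)`. These four roots are distinct, so a quartic has no others.
-/

open Polynomial

theorem Polynomial.mem_of_eval_eq_zero_of_natDegree_le_card {R : Type*} [CommRing R] [IsDomain R]
    [DecidableEq R] {p : R[X]} (hp : p ≠ 0) {s : Finset R} (hs : ∀ x ∈ s, p.eval x = 0)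
    (hcard : p.natDegree ≤ s.card) {r : R} (hr : p.eval r = 0) : r ∈ s := by
  by_contra hrs
  refine hp (eq_zero_of_natDegree_lt_card_of_eval_eq_zero' p (insert r s) ?_ ?_)
  · simpa only [Finset.forall_mem_insert] using ⟨hr, hs⟩
  · rw [Finset.card_insert_of_notMem hrs]
    omega

noncomputable def quartic (n : ℝ) : ℝ[X] :=
  X * (X + 2) * (C (n - 4) - X) * (C (n - 2) - X) - C (8 * (n - 2) * (n - 4))

namespace quartic

variable (n : ℝ)

theorem eval_eq (α : ℝ) :
    (quartic n).eval α = α * (α + 2) * (n - 4 - α) * (n - 2 - α) - 8 * (n - 2) * (n - 4) := by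
  simp [quartic]

theorem natDegree_eq : (quartic n).natDegree = 4 := by
  unfold quartic
  compute_degree!

theorem ne_zero : quartic n ≠ 0 := by
  intro h
  simpa [h] using natDegree_eq n

theorem eval_reflect (α : ℝ) : (quartic n).eval (n - 4 - α) = (quartic n).eval α := by
  simp only [eval_eq]
  ring

variable {n}

theorem eval_zero_neg (hn : 4 < n) : (quartic n).eval 0 < 0 := by
  rw [eval_eq]
  nlinarith

theorem eval_neg_two_neg (hn : 4 < n) : (quartic n).eval (-2) < 0 := by
  rw [eval_eq]
  nlinarith

theorem eval_neg_pos (hn : 4 < n) : 0 < (quartic n).eval (-n) := by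
  rw [eval_eq]
  nlinarith [mul_pos (mul_pos (by linarith : (0 : ℝ) < n - 2) (by linarith : (0 : ℝ) < n - 1))
    (by linarith : (0 : ℝ) < n - 4)]

/-- The value at the centre is `(n(n-4)/4)^2 - 8(n-2)(n-4)`, positive iff `n²(n-4) > 128(n-2)`,
which holds for `n ≥ 13` but fails at `n = 12`. -/
theorem eval_center_pos (hn : 13 ≤ n) : 0 < (quartic n).eval ((n - 4) / 2) := by
  have hcubic : 0 < n ^ 2 * (n - 4) - 128 * (n - 2) := by
    nlinarith [mul_nonneg (by linarith : (0 : ℝ) ≤ n - 13) (by linarith : (0 : ℝ) ≤ n)]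
  have := mul_pos (by linarith : (0 : ℝ) < n - 4) hcubic
  rw [eval_eq]
  linarith

end quartic

/-- For `N ≥ 13`, the quartic
`P(α) = α⁴ − 2(N−4)α³ + (N²−10N+20)α² + 2(N−2)(N−4)α − 8(N−2)(N−4)`
has four distinct real roots: exactly one negative, exactly one in `(0, (N−4)/2)`,
and exactly two greater than `(N−4)/2`. -/
theorem stmt_19 (N : ℕ) (hN : 13 ≤ N)
    (P : ℝ → ℝ)
    (hP : ∀ α : ℝ, P α =
      α ^ 4 - 2 * ((N : ℝ) - 4) * α ^ 3 + ((N : ℝ) ^ 2 - 10 * (N : ℝ) + 20) * α ^ 2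
        + 2 * ((N : ℝ) - 2) * ((N : ℝ) - 4) * α - 8 * ((N : ℝ) - 2) * ((N : ℝ) - 4)) :
    ∃ r₁ r₂ r₃ r₄ : ℝ,
      r₁ ≠ r₂ ∧ r₁ ≠ r₃ ∧ r₁ ≠ r₄ ∧ r₂ ≠ r₃ ∧ r₂ ≠ r₄ ∧ r₃ ≠ r₄ ∧
      P r₁ = 0 ∧ P r₂ = 0 ∧ P r₃ = 0 ∧ P r₄ = 0 ∧
      (∀ r : ℝ, P r = 0 → r = r₁ ∨ r = r₂ ∨ r = r₃ ∨ r = r₄) ∧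
      r₁ < 0 ∧
      (0 < r₂ ∧ r₂ < ((N : ℝ) - 4) / 2) ∧
      ((N : ℝ) - 4) / 2 < r₃ ∧ ((N : ℝ) - 4) / 2 < r₄ := by
  have hn : (13 : ℝ) ≤ N := by exact_mod_cast hN
  set n : ℝ := (N : ℝ)
  have hPq (α : ℝ) : P α = (quartic n).eval α := by rw [hP, quartic.eval_eq]; ring
  simp only [hPq]
  obtain ⟨r₁, ⟨hr₁l, hr₁u⟩, hr₁⟩ := intermediate_value_Ioo' (by linarith : -n ≤ -2)
    (quartic n).continuousOn
    ⟨quartic.eval_neg_two_neg (by linarith), quartic.eval_neg_pos (by linarith)⟩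
  obtain ⟨r₂, ⟨hr₂l, hr₂u⟩, hr₂⟩ := intermediate_value_Ioo (by linarith : 0 ≤ (n - 4) / 2)
    (quartic n).continuousOn ⟨quartic.eval_zero_neg (by linarith), quartic.eval_center_pos hn⟩
  have hr₃ := (quartic.eval_reflect n r₂).trans hr₂
  have hr₄ := (quartic.eval_reflect n r₁).trans hr₁
  obtain ⟨h₁₂, h₁₃, h₁₄, h₂₃, h₂₄, h₃₄⟩ : r₁ ≠ r₂ ∧ r₁ ≠ n - 4 - r₂ ∧ r₁ ≠ n - 4 - r₁ ∧
      r₂ ≠ n - 4 - r₂ ∧ r₂ ≠ n - 4 - r₁ ∧ n - 4 - r₂ ≠ n - 4 - r₁ := by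
    refine ⟨?_, ?_, ?_, ?_, ?_, ?_⟩ <;> intro h <;> linarith
  have hcard : (quartic n).natDegree ≤ ({r₁, r₂, n - 4 - r₂, n - 4 - r₁} : Finset ℝ).card :=
    (quartic.natDegree_eq n).trans_le
      (Finset.card_eq_four.2 ⟨_, _, _, _, h₁₂, h₁₃, h₁₄, h₂₃, h₂₄, h₃₄, rfl⟩).ge
  refine ⟨r₁, r₂, n - 4 - r₂, n - 4 - r₁, h₁₂, h₁₃, h₁₄, h₂₃, h₂₄, h₃₄, hr₁, hr₂, hr₃, hr₄,
    fun r hr ↦ ?_, by linarith, ⟨hr₂l, hr₂u⟩, by linarith, by linarith⟩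
  simpa using Polynomial.mem_of_eval_eq_zero_of_natDegree_le_card (quartic.ne_zero n)
    (by simp [hr₁, hr₂, hr₃, hr₄]) hcard hr
end
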